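/- arXiv:gr-qc/0606015 — 5 statements merged into one kernel-verified Lean document; each statement's English description precedes it below -/
import Mathlib

section
/- If F is a self-dual 2-form (*F = i·F) and H is an anti-self-dual 2-form (*H = -i·H), then F·H = H·F, i.e. the commutator [F,H] vanishes. (Self-dual and anti-self-dual 2-forms commute under the metric product; an algebraic fact underlying the decomposition arguments of Section 5 of the paper.) -/
open Matrix

noncomputable section

/-- The Minkowski metric `η = diag(-1,1,1,1)` as a 4×4 complex matrix. -/
def eta : Matrix (Fin 4) (Fin 4) ℂ := Matrix.diagonal ![-1, 1, 1, 1]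

/-- The metric product `A·B := A η B`. -/
def mdot (A B : Matrix (Fin 4) (Fin 4) ℂ) : Matrix (Fin 4) (Fin 4) ℂ := A * eta * B

/-- The commutator `[A,B] := A·B - B·A`. -/
def mcomm (A B : Matrix (Fin 4) (Fin 4) ℂ) : Matrix (Fin 4) (Fin 4) ℂ := mdot A B - mdot B A

/-- The anticommutator `{A,B} := A·B + B·A`. -/
def manti (A B : Matrix (Fin 4) (Fin 4) ℂ) : Matrix (Fin 4) (Fin 4) ℂ := mdot A B + mdot B A

/-- The scalar product `(A,B) := (1/2)·tr(A η Bᵀ η)`. -/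
def mprod (A B : Matrix (Fin 4) (Fin 4) ℂ) : ℂ := (1/2) * (A * eta * Bᵀ * eta).trace

/-- Sign of an integer, valued in `ℂ`. -/
def sgnZ (x : ℤ) : ℂ := if 0 < x then 1 else if x < 0 then -1 else 0

/-- The Levi-Civita symbol on `Fin 4`. -/
def eps (a b c d : Fin 4) : ℂ :=
  sgnZ ((b : ℤ) - a) * sgnZ ((c : ℤ) - a) * sgnZ ((d : ℤ) - a) *
  sgnZ ((c : ℤ) - b) * sgnZ ((d : ℤ) - b) * sgnZ ((d : ℤ) - c)

/-- The Hodge dual of a 2-form: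
`(*F)_{αβ} := (1/2)·Σ ε(α,β,γ,δ)·η_{γμ}·η_{δν}·F_{μν}`. -/
def hodge (F : Matrix (Fin 4) (Fin 4) ℂ) : Matrix (Fin 4) (Fin 4) ℂ :=
  Matrix.of fun α β => (1/2) * ∑ γ : Fin 4, ∑ δ : Fin 4, ∑ μ : Fin 4, ∑ ν : Fin 4,
    eps α β γ δ * eta γ μ * eta δ ν * F μ ν

/-- A 2-form is an antisymmetric matrix. -/
def IsTwoForm (F : Matrix (Fin 4) (Fin 4) ℂ) : Prop := Fᵀ = -F

/-- A self-dual 2-form: `*F = i·F`. -/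
def SelfDual (F : Matrix (Fin 4) (Fin 4) ℂ) : Prop :=
  IsTwoForm F ∧ hodge F = Complex.I • F

/-- An anti-self-dual 2-form: `*F = -i·F`. -/
def AntiSelfDual (F : Matrix (Fin 4) (Fin 4) ℂ) : Prop :=
  IsTwoForm F ∧ hodge F = (-Complex.I) • F

/-- A unitary SD bivector: a self-dual 2-form with `(𝒰,𝒰) = -1`. -/
def UnitarySD (U : Matrix (Fin 4) (Fin 4) ℂ) : Prop := SelfDual U ∧ mprod U U = -1

/-- A matrix with real entries. -/
def RealEntries (F : Matrix (Fin 4) (Fin 4) ℂ) : Prop := ∀ i j, (F i j).im = 0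

/-- A real unitary simple 2-form: real, `(U,U) = -1`, `(U,*U) = 0`. -/
def RealUnitarySimple (U : Matrix (Fin 4) (Fin 4) ℂ) : Prop :=
  IsTwoForm U ∧ RealEntries U ∧ mprod U U = -1 ∧ mprod U (hodge U) = 0

/-- The canonical SD bivector `𝒰 := (U - i·*U)/√2` of a real unitary simple 2-form. -/
def calU (U : Matrix (Fin 4) (Fin 4) ℂ) : Matrix (Fin 4) (Fin 4) ℂ :=
  ((Real.sqrt 2 : ℂ))⁻¹ • (U - Complex.I • hodge U)

/-- Entrywise complex conjugation. -/
def mconj (F : Matrix (Fin 4) (Fin 4) ℂ) : Matrix (Fin 4) (Fin 4) ℂ :=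
  F.map (starRingEnd ℂ)

end

/-! A 2-form with `*F = s • F` is determined by its electric part `e = (F₀₁, F₀₂, F₀₃)`: its
magnetic part `(F₂₃, F₃₁, F₁₂)` is `s • e`. In `1 + 3` block form, the commutator of such forms
with eigenvalues `s` and `t` and electric parts `e`, `f` has off-diagonal blocks `±(s + t) (e × f)`
and spatial block `(1 - s t) (e fᵀ - f eᵀ)`, and both vanish for `s = i`, `t = -i`. -/

section
variable {F : Matrix (Fin 4) (Fin 4) ℂ}

theorem IsTwoForm.apply_swap (hF : IsTwoForm F) (i j : Fin 4) : F j i = -F i j := by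
  simpa using congrFun (congrFun hF i) j

theorem IsTwoForm.apply_self (hF : IsTwoForm F) (i : Fin 4) : F i i = 0 :=
  CharZero.eq_neg_self_iff.mp (hF.apply_swap i i)

theorem IsTwoForm.hodge_apply_zero_one (hF : IsTwoForm F) : hodge F 0 1 = F 2 3 := by
  simp [hodge, eps, sgnZ, eta, Fin.sum_univ_four, hF.apply_swap 2 3, ← two_mul]

theorem IsTwoForm.hodge_apply_zero_two (hF : IsTwoForm F) : hodge F 0 2 = F 3 1 := by
  simp [hodge, eps, sgnZ, eta, Fin.sum_univ_four, hF.apply_swap 3 1, ← two_mul]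

theorem IsTwoForm.hodge_apply_zero_three (hF : IsTwoForm F) : hodge F 0 3 = F 1 2 := by
  simp [hodge, eps, sgnZ, eta, Fin.sum_univ_four, hF.apply_swap 1 2, ← two_mul]

end

def hodgeEigenform (s a b c : ℂ) : Matrix (Fin 4) (Fin 4) ℂ :=
  !![0, a, b, c;
     -a, 0, s * c, -(s * b);
     -b, -(s * c), 0, s * a;
     -c, s * b, -(s * a), 0]

theorem IsTwoForm.eq_hodgeEigenform {F : Matrix (Fin 4) (Fin 4) ℂ} {s : ℂ} (hF : IsTwoForm F)
    (hs : hodge F = s • F) : F = hodgeEigenform s (F 0 1) (F 0 2) (F 0 3) := by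
  have h23 : F 2 3 = s * F 0 1 := by
    rw [← hF.hodge_apply_zero_one, hs, Matrix.smul_apply, smul_eq_mul]
  have h31 : F 3 1 = s * F 0 2 := by
    rw [← hF.hodge_apply_zero_two, hs, Matrix.smul_apply, smul_eq_mul]
  have h12 : F 1 2 = s * F 0 3 := by
    rw [← hF.hodge_apply_zero_three, hs, Matrix.smul_apply, smul_eq_mul]
  ext i j
  fin_cases i <;> fin_cases j <;>
    simp [hodgeEigenform, hF.apply_self, hF.apply_swap 0 1, hF.apply_swap 0 2, hF.apply_swap 0 3,
      hF.apply_swap 2 3, hF.apply_swap 3 1, hF.apply_swap 1 2, h23, h31, h12]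

theorem mdot_apply (A B : Matrix (Fin 4) (Fin 4) ℂ) (i j : Fin 4) :
    mdot A B i j = -(A i 0 * B 0 j) + A i 1 * B 1 j + A i 2 * B 2 j + A i 3 * B 3 j := by
  simp [mdot, eta, Matrix.mul_apply, Fin.sum_univ_four]

theorem mcomm_hodgeEigenform_neg {s : ℂ} (hs : s ^ 2 = -1) (a b c x y z : ℂ) :
    mcomm (hodgeEigenform s a b c) (hodgeEigenform (-s) x y z) = 0 := by
  ext i j
  fin_cases i <;> fin_cases j <;>
    simp only [mcomm, Matrix.sub_apply, mdot_apply, hodgeEigenform, of_apply, Fin.zero_eta,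
      Fin.mk_one, Fin.reduceFinMk, cons_val', cons_val_zero, cons_val_one, cons_val,
      cons_val_fin_one, Matrix.zero_apply] <;> grind

/-- a self-dual 2-form `F` and an anti-self-dual 2-form `H` commute
under the metric product: `[F,H] = 0`. -/
theorem selfdual_antiselfdual_commute
    (F H : Matrix (Fin 4) (Fin 4) ℂ) (hF : SelfDual F) (hH : AntiSelfDual H) :
    mcomm F H = 0 := by
  rw [hF.1.eq_hodgeEigenform hF.2, hH.1.eq_hodgeEigenform hH.2]
  exact mcomm_hodgeEigenform_neg Complex.I_sq _ _ _ _ _ _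
end

section
/- Let U be a real unitary simple 2-form with v := U·U, and let N be a real symmetric 4×4 matrix supported on the time-like plane, i.e. N = v·η·N·η·v. If N commutes with U in the sense U·N = N·U (equivalently U η N = N η U), then N = λ·v for some real scalar λ. (The fact, used in the proof of Proposition 2 of the paper, that the sole symmetric tensor in V which commutes with U is proportional to v.) -/
open Matrix

section Aux

open Matrix

lemma mul4 (A B : Matrix (Fin 4) (Fin 4) ℂ) :
    A * B = Matrix.of fun i j => A i 0 * B 0 j + A i 1 * B 1 j + A i 2 * B 2 j + A i 3 * B 3 j := by
  ext i j; simp [Matrix.mul_apply, Fin.sum_univ_four]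

lemma trace4 (A : Matrix (Fin 4) (Fin 4) ℂ) : A.trace = A 0 0 + A 1 1 + A 2 2 + A 3 3 := by
  simp [Matrix.trace, Fin.sum_univ_four]

lemma eta_eq : eta = !![-1,0,0,0; 0,1,0,0; 0,0,1,0; 0,0,0,1] := by
  ext i j; fin_cases i <;> fin_cases j <;> simp [eta, Matrix.diagonal, vecHead, vecTail]

lemma one4 : (1 : Matrix (Fin 4) (Fin 4) ℂ) = !![1,0,0,0; 0,1,0,0; 0,0,1,0; 0,0,0,1] := by
  ext i j; fin_cases i <;> fin_cases j <;> simp [Matrix.one_apply, vecHead, vecTail]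

lemma eta_mul_eta : eta * eta = 1 := by
  rw [eta_eq, one4, mul4]; ext i j; fin_cases i <;> fin_cases j <;> simp [vecHead, vecTail]

lemma eta_transpose : etaᵀ = eta := by
  rw [eta_eq]; ext i j; fin_cases i <;> fin_cases j <;> simp [vecHead, vecTail, eta_eq]

lemma fz0 : ((0 : Fin 4) : ℤ) = 0 := rfl
lemma fz1 : ((1 : Fin 4) : ℤ) = 1 := rfl
lemma fz2 : ((2 : Fin 4) : ℤ) = 2 := rfl
lemma fz3 : ((3 : Fin 4) : ℤ) = 3 := rfl

lemma hodge_apply (F : Matrix (Fin 4) (Fin 4) ℂ) (α β : Fin 4) :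
    hodge F α β = (1/2) * ∑ γ : Fin 4, ∑ δ : Fin 4, eps α β γ δ * eta γ γ * eta δ δ * F γ δ := by
  simp only [hodge, Matrix.of_apply]
  congr 1
  refine Finset.sum_congr rfl fun γ _ => Finset.sum_congr rfl fun δ _ => ?_
  simp [eta, Matrix.diagonal_apply, ite_mul, mul_ite, mul_zero, zero_mul,
    Finset.sum_ite_eq, Finset.mem_univ, mul_assoc]

lemma hodge_explicit (a b c d e f : ℂ) :
    hodge !![0,a,b,c; -a,0,d,e; -b,-d,0,f; -c,-e,-f,0] =
      !![0,f,-e,d; -f,0,-c,b; e,c,0,-a; -d,-b,a,0] := by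
  ext i j
  rw [hodge_apply]
  fin_cases i <;> fin_cases j <;>
    · simp only [Fin.sum_univ_four]
      norm_num [eps, sgnZ, eta, fz0, fz1, fz2, fz3, Matrix.diagonal, vecHead, vecTail]
      try simp
      try ring

lemma transU (a b c d e f : ℂ) :
    (!![0,a,b,c; -a,0,d,e; -b,-d,0,f; -c,-e,-f,0])ᵀ
      = !![0,-a,-b,-c; a,0,-d,-e; b,d,0,-f; c,e,f,0] := by
  ext i j; fin_cases i <;> fin_cases j <;> simp

lemma transH (a b c d e f : ℂ) :
    (!![0,f,-e,d; -f,0,-c,b; e,c,0,-a; -d,-b,a,0])ᵀ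
      = !![0,-f,e,-d; f,0,c,-b; -e,-c,0,a; d,b,-a,0] := by
  ext i j; fin_cases i <;> fin_cases j <;> simp

lemma mprodUU_explicit (a b c d e f : ℂ) :
    mprod !![0,a,b,c; -a,0,d,e; -b,-d,0,f; -c,-e,-f,0] !![0,a,b,c; -a,0,d,e; -b,-d,0,f; -c,-e,-f,0]
      = f*f + e*e + d*d - c*c - b*b - a*a := by
  rw [mprod, transU]
  simp [trace4, mul4, eta_eq]
  ring

lemma mprodUH_explicit (a b c d e f : ℂ) :
    mprod !![0,a,b,c; -a,0,d,e; -b,-d,0,f; -c,-e,-f,0]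
      (hodge !![0,a,b,c; -a,0,d,e; -b,-d,0,f; -c,-e,-f,0])
      = -2*(c*d) + 2*(b*e) - 2*(a*f) := by
  rw [mprod, hodge_explicit, transH]
  simp [trace4, mul4, eta_eq]
  ring

lemma uM_explicit (a b c d e f : ℂ) :
    !![0,a,b,c; -a,0,d,e; -b,-d,0,f; -c,-e,-f,0] * eta
      = !![0, a, b, c; a, 0, d, e; b, -d, 0, f; c, -e, -f, 0] := by
  rw [eta_eq, mul4]; ext i j; fin_cases i <;> fin_cases j <;> · simp [vecHead, vecTail]; try ring

lemma u2_explicit (a b c d e f : ℂ) :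
    !![0, a, b, c; a, 0, d, e; b, -d, 0, f; c, -e, -f, 0] *
      !![0, a, b, c; a, 0, d, e; b, -d, 0, f; c, -e, -f, 0]
      = !![c*c + b*b + a*a, -(c*e) - b*d, -(c*f) + a*d, b*f + a*e;
           c*e + b*d, -(e*e) - d*d + a*a, -(e*f) + a*b, d*f + a*c;
           c*f - a*d, -(e*f) + a*b, -(f*f) - d*d + b*b, -(d*e) + b*c;
           -(b*f) - a*e, d*f + a*c, -(d*e) + b*c, -(f*f) - e*e + c*c] := by
  rw [mul4]; ext i j; fin_cases i <;> fin_cases j <;> · simp [vecHead, vecTail]; try ring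

lemma ch_core (a b c d e f : ℂ) :
    !![c*c + b*b + a*a, -(c*e) - b*d, -(c*f) + a*d, b*f + a*e;
       c*e + b*d, -(e*e) - d*d + a*a, -(e*f) + a*b, d*f + a*c;
       c*f - a*d, -(e*f) + a*b, -(f*f) - d*d + b*b, -(d*e) + b*c;
       -(b*f) - a*e, d*f + a*c, -(d*e) + b*c, -(f*f) - e*e + c*c] *
    !![c*c + b*b + a*a, -(c*e) - b*d, -(c*f) + a*d, b*f + a*e;
       c*e + b*d, -(e*e) - d*d + a*a, -(e*f) + a*b, d*f + a*c;
       c*f - a*d, -(e*f) + a*b, -(f*f) - d*d + b*b, -(d*e) + b*c;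
       -(b*f) - a*e, d*f + a*c, -(d*e) + b*c, -(f*f) - e*e + c*c]
    = (-(f*f + e*e + d*d - c*c - b*b - a*a)) •
      !![c*c + b*b + a*a, -(c*e) - b*d, -(c*f) + a*d, b*f + a*e;
         c*e + b*d, -(e*e) - d*d + a*a, -(e*f) + a*b, d*f + a*c;
         c*f - a*d, -(e*f) + a*b, -(f*f) - d*d + b*b, -(d*e) + b*c;
         -(b*f) - a*e, d*f + a*c, -(d*e) + b*c, -(f*f) - e*e + c*c]
      + ((1/4) * (-2*(c*d) + 2*(b*e) - 2*(a*f))^2) • (1 : Matrix (Fin 4) (Fin 4) ℂ) := by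
  rw [mul4, one4]; ext i j; fin_cases i <;> fin_cases j <;> · simp [vecHead, vecTail]; try ring

lemma trace_u3_core (a b c d e f : ℂ) :
    (!![c*c + b*b + a*a, -(c*e) - b*d, -(c*f) + a*d, b*f + a*e;
        c*e + b*d, -(e*e) - d*d + a*a, -(e*f) + a*b, d*f + a*c;
        c*f - a*d, -(e*f) + a*b, -(f*f) - d*d + b*b, -(d*e) + b*c;
        -(b*f) - a*e, d*f + a*c, -(d*e) + b*c, -(f*f) - e*e + c*c] *
     !![0, a, b, c; a, 0, d, e; b, -d, 0, f; c, -e, -f, 0]).trace = 0 := by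
  rw [mul4, trace4]; simp [vecHead, vecTail]; ring

lemma antisym_ext (U : Matrix (Fin 4) (Fin 4) ℂ) (h : Uᵀ = -U) :
    U = !![0, U 0 1, U 0 2, U 0 3;
          -(U 0 1), 0, U 1 2, U 1 3;
          -(U 0 2), -(U 1 2), 0, U 2 3;
          -(U 0 3), -(U 1 3), -(U 2 3), 0] := by
  have h' : ∀ i j, U j i = -(U i j) := fun i j => by
    have := congrFun (congrFun h i) j
    simpa [Matrix.transpose_apply] using this
  have hd : ∀ i, U i i = 0 := fun i => by
    have := h' i i; linear_combination (1/2 : ℂ) * this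
  ext i j
  fin_cases i <;> fin_cases j <;>
    simp [vecHead, vecTail, hd 0, hd 1, hd 2, hd 3, h' 0 1, h' 0 2, h' 0 3, h' 1 2, h' 1 3, h' 2 3]

lemma u4_eq_u2 (U : Matrix (Fin 4) (Fin 4) ℂ) (hanti : Uᵀ = -U)
    (h1 : mprod U U = -1) (h2 : mprod U (hodge U) = 0) :
    ((U * eta)^2) * ((U * eta)^2) = (U * eta)^2 := by
  rw [antisym_ext U hanti] at h1 h2 ⊢
  rw [mprodUU_explicit] at h1
  rw [mprodUH_explicit] at h2
  rw [pow_two, uM_explicit, u2_explicit, ch_core, h1, h2]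
  norm_num

lemma trace_u2_eq (U : Matrix (Fin 4) (Fin 4) ℂ) (hanti : Uᵀ = -U)
    (h1 : mprod U U = -1) : ((U * eta)^2).trace = 2 := by
  rw [antisym_ext U hanti] at h1 ⊢
  rw [mprodUU_explicit] at h1
  rw [pow_two, uM_explicit, u2_explicit, trace4]
  simp [vecHead, vecTail]
  linear_combination (-2 : ℂ) * h1

lemma trace_u3_eq (U : Matrix (Fin 4) (Fin 4) ℂ) (hanti : Uᵀ = -U) :
    ((U * eta)^3).trace = 0 := by
  rw [antisym_ext U hanti]
  rw [pow_succ, pow_two, uM_explicit, u2_explicit, trace_u3_core]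

lemma trace_toLin' (A : Matrix (Fin 4) (Fin 4) ℂ) :
    LinearMap.trace ℂ (Fin 4 → ℂ) (Matrix.toLin' A) = A.trace := by
  rw [LinearMap.trace_eq_matrix_trace ℂ (Pi.basisFun ℂ (Fin 4)),
    LinearMap.toMatrix_eq_toMatrix', LinearMap.toMatrix'_toLin']

/-- If `E` is an idempotent of trace 1 and `X` commutes with `E`, then `X*E = tr(X*E) • E`. -/
lemma rank_one_proj (E X : Matrix (Fin 4) (Fin 4) ℂ) (hE : E * E = E)
    (ht : E.trace = 1) (hc : X * E = E * X) : X * E = (X * E).trace • E := by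
  set f := Matrix.toLin' E with hf
  set g := Matrix.toLin' X with hg
  have hff : f ∘ₗ f = f := by rw [hf, ← Matrix.toLin'_mul, hE]
  obtain ⟨p, hp⟩ := (LinearMap.isProj_iff_isIdempotentElem f).2 hff
  have htr : LinearMap.trace ℂ (Fin 4 → ℂ) f = (Module.finrank ℂ p : ℂ) := hp.trace
  have hfr : Module.finrank ℂ p = 1 := by
    have : ((Module.finrank ℂ p : ℂ)) = 1 := by rw [← htr, hf, trace_toLin', ht]
    exact_mod_cast this
  obtain ⟨v, hv0, hvspan⟩ := (finrank_eq_one_iff').1 hfr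
  set h := g ∘ₗ f with hh
  have hXE : Matrix.toLin' (X * E) = h := by rw [Matrix.toLin'_mul]
  have hgf_fg : g ∘ₗ f = f ∘ₗ g := by
    rw [hf, hg, ← Matrix.toLin'_mul, ← Matrix.toLin'_mul, hc]
  have hhf : h ∘ₗ f = h := by
    rw [hh, LinearMap.comp_assoc, hff]
  have hfh : f ∘ₗ h = h := by
    rw [hh, ← LinearMap.comp_assoc, ← hgf_fg, LinearMap.comp_assoc, hff]
  have hmem : ∀ x, h x ∈ p := by
    intro x
    have : h x = f (h x) := by rw [← LinearMap.comp_apply, hfh]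
    rw [this]; exact hp.map_mem _
  obtain ⟨c, hcv⟩ := hvspan ⟨h v, hmem v⟩
  have hcv' : h (v : Fin 4 → ℂ) = c • (v : Fin 4 → ℂ) := by
    have := congrArg (Subtype.val) hcv
    simpa using this.symm
  have key : h = c • f := LinearMap.ext fun x => by
    obtain ⟨a, hav⟩ := hvspan ⟨f x, hp.map_mem x⟩
    have hav' : f x = a • (v : Fin 4 → ℂ) := by simpa using (congrArg Subtype.val hav).symm
    have h1 : h x = h (f x) := by rw [← LinearMap.comp_apply, hhf]
    rw [LinearMap.smul_apply, h1, hav', LinearMap.map_smul, hcv', smul_comm]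
  have hme : X * E = c • E := Matrix.toLin'.injective (by rw [_root_.map_smul, hXE, key, hf])
  rw [hme, Matrix.trace_smul, ht, smul_eq_mul, mul_one]

end Aux

/-- let `U` be a real unitary simple 2-form, `v := U·U`, and `N` a real
symmetric matrix supported on the time-like plane (`N = v·η·N·η·v`) that commutes with
`U` (`U η N = N η U`). Then `N = λ·v` for some real scalar `λ`. -/
theorem symmetric_on_plane_commuting_with_U
    (U N : Matrix (Fin 4) (Fin 4) ℂ) (hU : RealUnitarySimple U)
    (hNsym : Nᵀ = N) (hNreal : RealEntries N)
    (hNsupp : N = (mdot U U) * eta * N * eta * (mdot U U))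
    (hNcomm : U * eta * N = N * eta * U) :
    ∃ lam : ℝ, N = (lam : ℂ) • mdot U U := by
  obtain ⟨hanti, hUreal, h1, h2⟩ := hU
  have hee : eta * eta = 1 := eta_mul_eta
  have hPP : ((U*eta)^2) * ((U*eta)^2) = (U*eta)^2 := u4_eq_u2 U hanti h1 h2
  have hanti' : Uᵀ = -U := hanti
  have h3 : (U*eta)^3 = (U*eta)^2 * (U*eta) := pow_succ (U*eta) 2
  have h3' : (U*eta)^3 = (U*eta) * (U*eta)^2 := pow_succ' (U*eta) 2
  have hPw : ((U*eta)^2) * ((U*eta)^3) = (U*eta)^3 := by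
    rw [h3, ← Matrix.mul_assoc, hPP]
  have hwP : ((U*eta)^3) * ((U*eta)^2) = (U*eta)^3 := by
    rw [h3', Matrix.mul_assoc, hPP]
  have hww : ((U*eta)^3) * ((U*eta)^3) = (U*eta)^2 := by
    rw [h3, ← Matrix.mul_assoc, ← h3, hwP, h3, Matrix.mul_assoc, ← pow_two, hPP]
  have htr2 : ((U*eta)^2).trace = 2 := trace_u2_eq U hanti h1
  have htr3 : ((U*eta)^3).trace = 0 := trace_u3_eq U hanti
  have hCun : Commute (U*eta) (N*eta) := by
    show (U*eta) * (N*eta) = (N*eta) * (U*eta)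
    rw [← Matrix.mul_assoc, hNcomm, Matrix.mul_assoc]
  have hCP : Commute ((U*eta)^2) (N*eta) := hCun.pow_left 2
  have hCw : Commute ((U*eta)^3) (N*eta) := hCun.pow_left 3
  have hsupp : (N*eta) = ((U*eta)^2) * (N*eta) * ((U*eta)^2) := by
    conv_lhs => rw [hNsupp]
    simp only [mdot, pow_two, Matrix.mul_assoc]
  have hnP : (N*eta) * ((U*eta)^2) = (N*eta) := by
    conv_lhs => rw [hsupp]
    rw [Matrix.mul_assoc (((U*eta)^2) * (N*eta)), hPP, ← hsupp]
  have hPn : ((U*eta)^2) * (N*eta) = (N*eta) := by rw [hCP.eq, hnP]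
  -- trace of n * w is zero
  have htrnw : ((N*eta) * ((U*eta)^3)).trace = 0 := by
    have e1 : ((N*eta) * ((U*eta)^3))ᵀ = (-(eta*U))^3 * (eta * N) := by
      simp only [Matrix.transpose_mul, Matrix.transpose_pow, eta_transpose, hNsym, hanti',
        Matrix.mul_neg]
    have e3 : (-(eta*U))^3 = -((eta*U)^3) := Odd.neg_pow (by decide) _
    have e5 : (eta*U)^3 * (eta*N) = eta * (((U*eta)^3) * N) := by
      simp only [pow_succ, pow_zero, one_mul, Matrix.mul_assoc]
    have hx : ((N*eta) * ((U*eta)^3)).trace = -(((N*eta) * ((U*eta)^3)).trace) := by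
      calc ((N*eta) * ((U*eta)^3)).trace
          = (((N*eta) * ((U*eta)^3))ᵀ).trace := (Matrix.trace_transpose _).symm
        _ = ((-((eta*U)^3)) * (eta*N)).trace := by rw [e1, e3]
        _ = -(((eta*U)^3 * (eta*N)).trace) := by rw [Matrix.neg_mul, Matrix.trace_neg]
        _ = -((eta * (((U*eta)^3) * N)).trace) := by rw [e5]
        _ = -(((((U*eta)^3) * N) * eta).trace) := by rw [Matrix.trace_mul_comm]
        _ = -((((U*eta)^3) * (N * eta)).trace) := by rw [Matrix.mul_assoc]
        _ = -(((N*eta) * ((U*eta)^3)).trace) := by rw [Matrix.trace_mul_comm]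
    linear_combination (1/2 : ℂ) * hx
  -- the scalar
  set α : ℂ := (1/2 : ℂ) * (N*eta).trace with hα
  have htrn : (N*eta).trace = 2 * α := by rw [hα]; ring
  set X : Matrix (Fin 4) (Fin 4) ℂ := (N*eta) - α • ((U*eta)^2) with hXdef
  have hXP : X * ((U*eta)^2) = X := by
    rw [hXdef, Matrix.sub_mul, hnP, Matrix.smul_mul, hPP]
  have hPX : ((U*eta)^2) * X = X := by
    rw [hXdef, Matrix.mul_sub, hPn, Matrix.mul_smul, hPP]
  have hXw : X * ((U*eta)^3) = ((U*eta)^3) * X := by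
    rw [hXdef, Matrix.sub_mul, Matrix.mul_sub, ← hCw.eq, Matrix.smul_mul, Matrix.mul_smul,
      hPw, hwP]
  have htrX : X.trace = 0 := by
    rw [hXdef, Matrix.trace_sub, Matrix.trace_smul, htr2, htrn, smul_eq_mul]
    ring
  have htrXw : (X * ((U*eta)^3)).trace = 0 := by
    rw [hXdef, Matrix.sub_mul, Matrix.trace_sub, htrnw, Matrix.smul_mul, hPw,
      Matrix.trace_smul, htr3, smul_zero, sub_zero]
  -- projectors
  set Ep : Matrix (Fin 4) (Fin 4) ℂ := (1/2 : ℂ) • ((U*eta)^2 + (U*eta)^3) with hEp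
  set Em : Matrix (Fin 4) (Fin 4) ℂ := (1/2 : ℂ) • ((U*eta)^2 - (U*eta)^3) with hEm
  have hSp : ((U*eta)^2 + (U*eta)^3) * ((U*eta)^2 + (U*eta)^3)
      = (2:ℂ) • ((U*eta)^2 + (U*eta)^3) := by
    rw [Matrix.add_mul, Matrix.mul_add, Matrix.mul_add, hPP, hPw, hwP, hww, two_smul]
    abel
  have hSm : ((U*eta)^2 - (U*eta)^3) * ((U*eta)^2 - (U*eta)^3)
      = (2:ℂ) • ((U*eta)^2 - (U*eta)^3) := by
    rw [Matrix.sub_mul, Matrix.mul_sub, Matrix.mul_sub, hPP, hPw, hwP, hww, two_smul]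
    abel
  have hEp2 : Ep * Ep = Ep := by
    rw [hEp, Matrix.smul_mul, Matrix.mul_smul, hSp, smul_smul, smul_smul]
    norm_num
  have hEm2 : Em * Em = Em := by
    rw [hEm, Matrix.smul_mul, Matrix.mul_smul, hSm, smul_smul, smul_smul]
    norm_num
  have htrEp : Ep.trace = 1 := by
    rw [hEp, Matrix.trace_smul, Matrix.trace_add, htr2, htr3, add_zero, smul_eq_mul]
    norm_num
  have htrEm : Em.trace = 1 := by
    rw [hEm, Matrix.trace_smul, Matrix.trace_sub, htr2, htr3, sub_zero, smul_eq_mul]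
    norm_num
  have hXEp : X * Ep = Ep * X := by
    rw [hEp, Matrix.mul_smul, Matrix.smul_mul]
    congr 1
    rw [Matrix.mul_add, hXP, hXw, Matrix.add_mul, hPX]
  have hXEm : X * Em = Em * X := by
    rw [hEm, Matrix.mul_smul, Matrix.smul_mul]
    congr 1
    rw [Matrix.mul_sub, hXP, hXw, Matrix.sub_mul, hPX]
  have htrXEp : (X * Ep).trace = 0 := by
    rw [hEp, Matrix.mul_smul, Matrix.trace_smul, Matrix.mul_add, Matrix.trace_add, hXP,
      htrX, htrXw, add_zero, smul_zero]
  have htrXEm : (X * Em).trace = 0 := by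
    rw [hEm, Matrix.mul_smul, Matrix.trace_smul, Matrix.mul_sub, Matrix.trace_sub, hXP,
      htrX, htrXw, sub_zero, smul_zero]
  have hXEp0 : X * Ep = 0 := by
    have := rank_one_proj Ep X hEp2 htrEp hXEp
    rw [htrXEp, zero_smul] at this
    exact this
  have hXEm0 : X * Em = 0 := by
    have := rank_one_proj Em X hEm2 htrEm hXEm
    rw [htrXEm, zero_smul] at this
    exact this
  have hXzero : X = 0 := by
    have hsum : Ep + Em = (U*eta)^2 := by
      rw [hEp, hEm, ← smul_add]
      have : (U*eta)^2 + (U*eta)^3 + ((U*eta)^2 - (U*eta)^3) = (2:ℂ) • ((U*eta)^2) := by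
        rw [two_smul]; abel
      rw [this, smul_smul]
      norm_num
    calc X = X * ((U*eta)^2) := hXP.symm
      _ = X * (Ep + Em) := by rw [hsum]
      _ = X * Ep + X * Em := by rw [Matrix.mul_add]
      _ = 0 := by rw [hXEp0, hXEm0, add_zero]
  have hn_eq : (N*eta) = α • ((U*eta)^2) := by
    have := sub_eq_zero.mp hXzero
    exact this
  have hNα : N = α • mdot U U := by
    have hN' : N = (N*eta)*eta := by rw [Matrix.mul_assoc, hee, Matrix.mul_one]
    rw [hN', hn_eq, Matrix.smul_mul]
    congr 1
    rw [pow_two, Matrix.mul_assoc (U*eta), Matrix.mul_assoc U eta eta, hee,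
      Matrix.mul_one, mdot, Matrix.mul_assoc]
  -- reality of α
  have htrace_val : (N*eta).trace = -(N 0 0) + N 1 1 + N 2 2 + N 3 3 := by
    rw [trace4, eta_eq, mul4]
    simp [vecHead, vecTail]
    try ring
  have hre : ∀ i : Fin 4, (((N i i).re : ℝ) : ℂ) = N i i := fun i =>
    Complex.ext (by simp) (by simpa using (hNreal i i).symm)
  refine ⟨(1/2 : ℝ) * (-(N 0 0).re + (N 1 1).re + (N 2 2).re + (N 3 3).re), ?_⟩
  have hcast : (((1/2 : ℝ) * (-(N 0 0).re + (N 1 1).re + (N 2 2).re + (N 3 3).re) : ℝ) : ℂ) = α := by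
    rw [hα, htrace_val]
    push_cast
    rw [hre 0, hre 1, hre 2, hre 3]
    try ring
  rw [hcast]
  exact hNα
end

section
/- The characteristic polynomial of the endomorphism W equals (X - Ω)·(X² + Ω·X + (σ - 2Ω²)). In particular the eigenvalues of W are Ω and (1/2)·(-Ω ± √(9Ω² - 4σ)). (The eigenvalue statement of Theorem 3 of the paper.) -/
open Module LinearMap

noncomputable section

/-- The endomorphism `W(x) := 3Ω·B(u,x)·u + Ω·x + B(u,x)·z + B(z,x)·u` of `V`,
representing the self-dual Weyl tensor `𝒲 = 3Ω·𝒰⊗𝒰 + Ω·𝒢 + 𝒰⊗̃𝒵` of a space-time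
admitting a 2+2 umbilical structure acting on self-dual bivectors. -/
def Wmap {V : Type*} [AddCommGroup V] [Module ℂ V]
    (B : LinearMap.BilinForm ℂ V) (Ω : ℂ) (u z : V) : V →ₗ[ℂ] V :=
  (3 * Ω) • (B u).smulRight u + Ω • LinearMap.id + (B u).smulRight z + (B z).smulRight u

end

/-!
In a basis `u, e₁, e₂` with `e₁, e₂` spanning the `B`-orthogonal complement of `u`, which contains
`z = z₁ e₁ + z₂ e₂`, the map `W` has the arrow-shaped matrix
`[[-2Ω, B(z,e₁), B(z,e₂)], [-z₁, Ω, 0], [-z₂, 0, Ω]]` (symmetry of `B` gives `B(z,u) = 0`).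
Its characteristic polynomial is `(X - Ω)((X + 2Ω)(X - Ω) + B(z,z))`, and the eigenvalues are
the roots of the two factors, the quadratic one solved by completing the square.
-/

open Polynomial

theorem Matrix.charpoly_fin_three_arrow {R : Type*} [CommRing R] (a b₁ b₂ c₁ c₂ d : R) :
    !![a, b₁, b₂; c₁, d, 0; c₂, 0, d].charpoly
      = (X - C d) * ((X - C a) * (X - C d) - C (b₁ * c₁ + b₂ * c₂)) := by
  rw [Matrix.charpoly, Matrix.det_fin_three]
  simp
  ring

theorem Module.Dual.exists_basis_zero_eq_and_apply_succ_eq_zero {K V : Type*} [Field K]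
    [AddCommGroup V] [Module K V] [FiniteDimensional K V] {n : ℕ} (hn : finrank K V = n + 1)
    {φ : Module.Dual K V} {u : V} (hu : φ u ≠ 0) :
    ∃ b : Basis (Fin (n + 1)) K V, b 0 = u ∧ ∀ i : Fin n, φ (b i.succ) = 0 := by
  have hker : finrank K (ker φ) = n := by
    have := Module.Dual.finrank_ker_add_one_of_ne_zero (f := φ) (by rintro rfl; exact hu rfl)
    omega
  let b := Basis.mkFinCons u (finBasisOfFinrankEq K (ker φ) hker)
    (fun c x hx hcx => by
      simpa [hu, mem_ker.mp hx] using congrArg φ hcx)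
    (fun x => ⟨-φ x / φ u, by simp [hu]⟩)
  exact ⟨b, by simp [b], fun i => by simp [b]⟩

theorem Wmap_apply {V : Type*} [AddCommGroup V] [Module ℂ V]
    (B : LinearMap.BilinForm ℂ V) (Ω : ℂ) (u z x : V) :
    Wmap B Ω u z x = (3 * Ω * B u x) • u + Ω • x + B u x • z + B z x • u := by
  simp [Wmap, mul_smul]

theorem charpoly_Wmap {V : Type*} [AddCommGroup V] [Module ℂ V] [FiniteDimensional ℂ V]
    (hdim : finrank ℂ V = 3) (B : LinearMap.BilinForm ℂ V) (Ω : ℂ) (u z : V)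
    (hu : B u u = -1) (huz : B u z = 0) (hzu : B z u = 0) :
    (Wmap B Ω u z).charpoly = (X - C Ω) * (X ^ 2 + C Ω * X + C (B z z - 2 * Ω ^ 2)) := by
  obtain ⟨b, hb0, hbker⟩ :=
    Module.Dual.exists_basis_zero_eq_and_apply_succ_eq_zero hdim (by simp [hu] : B u u ≠ 0)
  have hb1 : B u (b 1) = 0 := hbker 0
  have hb2 : B u (b 2) = 0 := hbker 1
  have hz_repr := b.sum_repr z
  rw [Fin.sum_univ_three, hb0] at hz_repr
  have hz0 : b.repr z 0 = 0 := by
    simpa [hu, hb1, hb2, huz] using congrArg (B u) hz_repr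
  obtain ⟨c₁, c₂, hz⟩ : ∃ c₁ c₂ : ℂ, z = c₁ • b 1 + c₂ • b 2 :=
    ⟨_, _, by simpa [hz0] using hz_repr.symm⟩
  have hW : Wmap B Ω u z = Matrix.toLin b b
      !![-2 * Ω, B z (b 1), B z (b 2); -c₁, Ω, 0; -c₂, 0, Ω] := by
    refine b.ext fun i => ?_
    rw [Matrix.toLin_self, Wmap_apply]
    fin_cases i
    · simp [Fin.sum_univ_three, hb0, hu, hzu]
      linear_combination (norm := module) -hz
    all_goals simp [Fin.sum_univ_three, hb0, hb1, hb2]; module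
  have hσ : B z z = c₁ * B z (b 1) + c₂ * B z (b 2) := by
    simpa using congrArg (B z) hz
  rw [hW, ← charpoly_toMatrix _ b, toMatrix_toLin, Matrix.charpoly_fin_three_arrow, hσ]
  simp only [map_add, map_sub, map_mul, map_neg, map_pow, map_ofNat]
  ring

theorem sq_add_mul_add_eq_zero_iff {K : Type*} [Field K] [NeZero (2 : K)] (p q μ : K) :
    μ ^ 2 + p * μ + q = 0 ↔ ∃ α : K, α ^ 2 = p ^ 2 - 4 * q ∧ μ = (-p + α) / 2 := by
  have h2 : (2 : K) ≠ 0 := two_ne_zero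
  constructor
  · intro h
    exact ⟨2 * μ + p, by linear_combination 4 * h, by field_simp; ring⟩
  · rintro ⟨α, hα, rfl⟩
    field_simp
    linear_combination hα

theorem weyl_charpoly_general
    {V : Type*} [AddCommGroup V] [Module ℂ V] [FiniteDimensional ℂ V]
    (hdim : finrank ℂ V = 3)
    (B : LinearMap.BilinForm ℂ V) (hBsym : ∀ x y, B x y = B y x)
    (Ω : ℂ) (u z : V) (hu : B u u = -1) (huz : B u z = 0) :
    (Wmap B Ω u z).charpoly
        = (X - C Ω) * (X ^ 2 + C Ω * X + C (B z z - 2 * Ω ^ 2)) ∧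
    (∀ μ : ℂ, Module.End.HasEigenvalue (Wmap B Ω u z) μ ↔
      (μ = Ω ∨ ∃ α : ℂ, α ^ 2 = 9 * Ω ^ 2 - 4 * B z z ∧ μ = (-Ω + α) / 2)) := by
  have hcharpoly := charpoly_Wmap hdim B Ω u z hu huz ((hBsym z u).trans huz)
  refine ⟨hcharpoly, fun μ => ?_⟩
  have hdiscrim : 9 * Ω ^ 2 - 4 * B z z = Ω ^ 2 - 4 * (B z z - 2 * Ω ^ 2) := by ring
  rw [Module.End.hasEigenvalue_iff_isRoot_charpoly, hcharpoly, root_mul, root_X_sub_C, eq_comm,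
    hdiscrim, ← sq_add_mul_add_eq_zero_iff]
  simp

open Polynomial in
/-- eigenvalues, Theorem 3: the characteristic polynomial of `W` equals
`(X - Ω)(X² + Ω·X + (σ - 2Ω²))`; in particular the eigenvalues of `W` are `Ω` and
`(1/2)(-Ω ± √(9Ω² - 4σ))`. -/
theorem weyl_charpoly
    {V : Type*} [AddCommGroup V] [Module ℂ V] [FiniteDimensional ℂ V]
    (hdim : finrank ℂ V = 3)
    (B : LinearMap.BilinForm ℂ V) (hBsym : ∀ x y, B x y = B y x)
    (hBnd : B.Nondegenerate)
    (Ω : ℂ) (u z : V) (hu : B u u = -1) (huz : B u z = 0) :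
    (Wmap B Ω u z).charpoly
        = (X - C Ω) * (X ^ 2 + C Ω * X + C (B z z - 2 * Ω ^ 2)) ∧
    (∀ μ : ℂ, Module.End.HasEigenvalue (Wmap B Ω u z) μ ↔
      (μ = Ω ∨ ∃ α : ℂ, α ^ 2 = 9 * Ω ^ 2 - 4 * B z z ∧ μ = (-Ω + α) / 2)) :=
  weyl_charpoly_general hdim B hBsym Ω u z hu huz
end

section
/- Assume z = 0 and Ω ≠ 0. Then: W(u) = -2Ω·u; W(w) = Ω·w for every w ∈ V with B(u,w) = 0; (W - Ω·id) ∘ (W + 2Ω·id) = 0; and W - Ω·id ≠ 0 ≠ W + 2Ω·id. Hence W is diagonalizable with exactly the two distinct eigenvalues Ω (double) and -2Ω (simple), and u is an eigenvector for the simple eigenvalue. (The algebraic content of case (iii) of Theorem 4 and of Proposition 4 of the paper: Petrov–Bel type D, with 𝒰 the principal SD bivector of the Weyl tensor.) -/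
/-!
For `z = 0` the map is `W = Ω·id + 3Ω·P` with `P = B(u, ·) u`, and `P² = -P` because
`B(u, u) = -1`. Hence `W` is `-2Ω` on `u` and `Ω` on the hyperplane `ker B(u, ·)`, which is
nonzero since `dim V = 3 > 1`; the two eigenvalues differ because `Ω ≠ 0`.
-/

open Module LinearMap

theorem LinearMap.sub_smul_id_ne_zero_of_apply_eq_smul {K V : Type*} [Field K] [AddCommGroup V]
    [Module K V] {T : V →ₗ[K] V} {a μ : K} {v : V} (hv : v ≠ 0) (hTv : T v = μ • v)
    (hμa : μ ≠ a) : T - a • LinearMap.id ≠ 0 := by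
  intro hT
  have hv' : (μ - a) • v = 0 := by
    rw [sub_smul, ← hTv]
    simpa using LinearMap.congr_fun hT v
  exact hv ((smul_eq_zero.mp hv').resolve_left (sub_ne_zero.mpr hμa))

section Wmap

variable {V : Type*} [AddCommGroup V] [Module ℂ V] (B : LinearMap.BilinForm ℂ V) (Ω : ℂ)
  {u : V}

theorem Wmap_zero_apply (u x : V) : Wmap B Ω u 0 x = (3 * Ω * B u x) • u + Ω • x := by
  simp [Wmap, smul_smul]

variable {B}

theorem Wmap_zero_apply_self (hu : B u u = -1) : Wmap B Ω u 0 u = (-2 * Ω) • u := by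
  rw [Wmap_zero_apply, hu]
  module

theorem Wmap_zero_apply_of_orthogonal {w : V} (hw : B u w = 0) : Wmap B Ω u 0 w = Ω • w := by
  rw [Wmap_zero_apply, hw]
  module

theorem Wmap_zero_sub_comp_add_eq_zero (hu : B u u = -1) :
    (Wmap B Ω u 0 - Ω • LinearMap.id) ∘ₗ (Wmap B Ω u 0 + (2 * Ω) • LinearMap.id) = 0 := by
  ext x
  simp only [comp_apply, LinearMap.sub_apply, LinearMap.add_apply, LinearMap.smul_apply,
    id_apply, LinearMap.zero_apply, Wmap_zero_apply, map_add, map_smul, hu]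
  match_scalars <;> ring

end Wmap

theorem typeD_case_general
    {V : Type*} [AddCommGroup V] [Module ℂ V]
    (hdim : finrank ℂ V = 3)
    (B : LinearMap.BilinForm ℂ V)
    (Ω : ℂ) (u z : V) (hu : B u u = -1)
    (hz : z = 0) (hΩ : Ω ≠ 0) :
    Wmap B Ω u z u = (-2 * Ω) • u ∧
    (∀ w : V, B u w = 0 → Wmap B Ω u z w = Ω • w) ∧
    (Wmap B Ω u z - Ω • LinearMap.id) ∘ₗ (Wmap B Ω u z + (2 * Ω) • LinearMap.id) = 0 ∧
    Wmap B Ω u z - Ω • LinearMap.id ≠ 0 ∧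
    Wmap B Ω u z + (2 * Ω) • LinearMap.id ≠ 0 := by
  subst hz
  have : FiniteDimensional ℂ V := Module.finite_of_finrank_eq_succ hdim
  have hu0 : u ≠ 0 := by
    rintro rfl
    simp at hu
  obtain ⟨w, hw, hw0⟩ := Submodule.exists_mem_ne_zero_of_ne_bot <|
    (B u).ker_ne_bot_of_finrank_lt (by rw [finrank_self, hdim]; norm_num)
  have hΩ_ne : -2 * Ω ≠ Ω := fun h => hΩ (by linear_combination -h / 3)
  have hΩ_ne' : Ω ≠ -(2 * Ω) := fun h => hΩ (by linear_combination h / 3)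
  refine ⟨Wmap_zero_apply_self Ω hu, fun v hv => Wmap_zero_apply_of_orthogonal Ω hv,
    Wmap_zero_sub_comp_add_eq_zero Ω hu,
    sub_smul_id_ne_zero_of_apply_eq_smul hu0 (Wmap_zero_apply_self Ω hu) hΩ_ne, ?_⟩
  rw [← sub_neg_eq_add, ← neg_smul]
  exact sub_smul_id_ne_zero_of_apply_eq_smul hw0 (Wmap_zero_apply_of_orthogonal Ω hw) hΩ_ne'

/-- Theorem 4 case (iii) and Proposition 4, type D: if `z = 0` and
`Ω ≠ 0` then `W(u) = -2Ω·u`, `W(w) = Ω·w` for all `w ⊥ u`,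
`(W - Ω·id)∘(W + 2Ω·id) = 0`, and `W - Ω·id ≠ 0 ≠ W + 2Ω·id`. -/
theorem typeD_case
    {V : Type*} [AddCommGroup V] [Module ℂ V] [FiniteDimensional ℂ V]
    (hdim : finrank ℂ V = 3)
    (B : LinearMap.BilinForm ℂ V) (hBsym : ∀ x y, B x y = B y x)
    (hBnd : B.Nondegenerate)
    (Ω : ℂ) (u z : V) (hu : B u u = -1) (huz : B u z = 0)
    (hz : z = 0) (hΩ : Ω ≠ 0) :
    Wmap B Ω u z u = (-2 * Ω) • u ∧
    (∀ w : V, B u w = 0 → Wmap B Ω u z w = Ω • w) ∧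
    (Wmap B Ω u z - Ω • LinearMap.id) ∘ₗ (Wmap B Ω u z + (2 * Ω) • LinearMap.id) = 0 ∧
    Wmap B Ω u z - Ω • LinearMap.id ≠ 0 ∧
    Wmap B Ω u z + (2 * Ω) • LinearMap.id ≠ 0 :=
  typeD_case_general hdim B Ω u z hu hz hΩ
end

section
/- Assume Ω ≠ 0, z ≠ 0 and σ = 0. Then: W(z) = Ω·z; (W - Ω·id) ∘ (W - Ω·id) ∘ (W + 2Ω·id) = 0; and (W - Ω·id) ∘ (W + 2Ω·id) ≠ 0. Hence W has the double eigenvalue Ω with the null vector z as eigenvector, the simple eigenvalue -2Ω, and minimal polynomial (X - Ω)²(X + 2Ω). (The algebraic content of the first case of Proposition 5 of the paper: Petrov–Bel type II with 𝒵 the canonical null SD eigenbivector determining the double Debever direction.) -/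
open Module LinearMap

/-! The whole computation reduces to the identity `(W - Ω)(W + 2Ω) x = -B(z,x) z`, valid when
`u` is a unit vector orthogonal to the null vector `z`. Since `z` is itself an eigenvector of `W` for
`Ω`, one more factor `W - Ω` annihilates it, while nondegeneracy of `B` yields an `x` with
`B(z,x) ≠ 0`. -/

namespace Wmap

variable {V : Type*} [AddCommGroup V] [Module ℂ V] (B : LinearMap.BilinForm ℂ V) (Ω : ℂ) (u z : V)

theorem apply (x : V) :
    Wmap B Ω u z x = (3 * Ω * B u x) • u + Ω • x + B u x • z + B z x • u := by
  simp [Wmap, smul_smul]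

theorem apply_self_of_orthogonal_of_isotropic (huz : B u z = 0) (hσ : B z z = 0) :
    Wmap B Ω u z z = Ω • z := by
  simp [apply, huz, hσ]

theorem sub_comp_add_apply (hu : B u u = -1) (huz : B u z = 0) (hzu : B z u = 0)
    (hσ : B z z = 0) (x : V) :
    ((Wmap B Ω u z - Ω • LinearMap.id) ∘ₗ (Wmap B Ω u z + (2 * Ω) • LinearMap.id)) x
      = -B z x • z := by
  simp only [coe_comp, Function.comp_apply, LinearMap.sub_apply, LinearMap.add_apply,
    LinearMap.smul_apply, id_coe, id_eq, apply, map_add, map_smul, hu, huz, hzu, hσ]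
  module

end Wmap

theorem typeII_first_case_general
    {V : Type*} [AddCommGroup V] [Module ℂ V]
    (B : LinearMap.BilinForm ℂ V) (hBsym : ∀ x y, B x y = B y x)
    (hBnd : B.Nondegenerate)
    (Ω : ℂ) (u z : V) (hu : B u u = -1) (huz : B u z = 0)
    (hz : z ≠ 0) (hσ : B z z = 0) :
    Wmap B Ω u z z = Ω • z ∧
    (Wmap B Ω u z - Ω • LinearMap.id) ∘ₗ (Wmap B Ω u z - Ω • LinearMap.id)
        ∘ₗ (Wmap B Ω u z + (2 * Ω) • LinearMap.id) = 0 ∧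
    (Wmap B Ω u z - Ω • LinearMap.id) ∘ₗ (Wmap B Ω u z + (2 * Ω) • LinearMap.id) ≠ 0 := by
  have hzu : B z u = 0 := (hBsym z u).trans huz
  have hWz := Wmap.apply_self_of_orthogonal_of_isotropic B Ω u z huz hσ
  have hquad := Wmap.sub_comp_add_apply B Ω u z hu huz hzu hσ
  refine ⟨hWz, ?_, ?_⟩
  · ext x
    rw [comp_apply, hquad, map_smul, LinearMap.sub_apply, hWz, LinearMap.smul_apply, id_apply,
      sub_self, smul_zero, LinearMap.zero_apply]
  · intro h
    obtain ⟨x, hx⟩ : ∃ x, B z x ≠ 0 := by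
      by_contra! h'
      exact hz (hBnd.1 z h')
    have hzero := hquad x
    rw [h, LinearMap.zero_apply, eq_comm, smul_eq_zero, neg_eq_zero] at hzero
    exact hzero.elim hx hz

/-- Proposition 5, first type II case: if `Ω ≠ 0`, `z ≠ 0` and `σ = 0`
then `W(z) = Ω·z`, `(W - Ω·id)∘(W - Ω·id)∘(W + 2Ω·id) = 0` and
`(W - Ω·id)∘(W + 2Ω·id) ≠ 0`. -/
theorem typeII_first_case
    {V : Type*} [AddCommGroup V] [Module ℂ V] [FiniteDimensional ℂ V]
    (hdim : finrank ℂ V = 3)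
    (B : LinearMap.BilinForm ℂ V) (hBsym : ∀ x y, B x y = B y x)
    (hBnd : B.Nondegenerate)
    (Ω : ℂ) (u z : V) (hu : B u u = -1) (huz : B u z = 0)
    (hΩ : Ω ≠ 0) (hz : z ≠ 0) (hσ : B z z = 0) :
    Wmap B Ω u z z = Ω • z ∧
    (Wmap B Ω u z - Ω • LinearMap.id) ∘ₗ (Wmap B Ω u z - Ω • LinearMap.id)
        ∘ₗ (Wmap B Ω u z + (2 * Ω) • LinearMap.id) = 0 ∧
    (Wmap B Ω u z - Ω • LinearMap.id) ∘ₗ (Wmap B Ω u z + (2 * Ω) • LinearMap.id) ≠ 0 :=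
  typeII_first_case_general B hBsym hBnd Ω u z hu huz hz hσ
end
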